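/- arXiv:math/9804104 — 2 statements merged into one kernel-verified Lean document; each statement's English description precedes it below -/
import Mathlib

section
/- Let V be a multiplicative unitary on a finite-dimensional Hilbert space H. Suppose ξ₁,ξ₂,η₁,η₂ ∈ H satisfy V(ξ₁⊗η₁) = ξ₁⊗η₁ and V(ξ₂⊗η₂) = ξ₂⊗η₂. Then L(ω_{ξ₁,ξ₂}) L(ω_{η₁,η₂}) = ⟨ξ₁,ξ₂⟩ · L(ω_{η₁,η₂}) and ρ(ω_{ξ₁,ξ₂}) ρ(ω_{η₁,η₂}) = ⟨η₁,η₂⟩ · ρ(ω_{ξ₁,ξ₂}). -/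
/-!
Both identities are read off compressions of three-leg operators. Writing `A ξ η` for
`h ↦ ξ ⊗ η ⊗ h`, the product `L(ω_{ξ₁,ξ₂}) L(ω_{η₁,η₂})` is `(A ξ₁ η₁)* V₁₃ V₂₃ (A ξ₂ η₂)`.
The pentagon equation and unitarity give `V₁₃ V₂₃ = V₁₂* V₂₃ V₁₂`, the invariant vectors
`ξᵢ ⊗ ηᵢ` absorb both copies of `V₁₂`, and what is left, the compression of `V₂₃`, is
`⟨ξ₁, ξ₂⟩ L(ω_{η₁,η₂})`. Symmetrically, with `h ↦ h ⊗ ξ ⊗ η`, the product of the `ρ`'s is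
the compression of `V₁₂ V₁₃ = V₂₃ V₁₂ V₂₃*`, where the invariant vectors absorb `V₂₃`.
-/

open scoped InnerProductSpace ComplexOrder

noncomputable section

namespace MU

variable {ι : Type*} [Fintype ι] [DecidableEq ι]

/-- The elementary tensor `f ⊗ g` of two vectors, in the model
`H ⊗ H = EuclideanSpace ℂ (ι × ι)`. -/
def tens (f g : EuclideanSpace ℂ ι) : EuclideanSpace ℂ (ι × ι) :=
  WithLp.toLp 2 (fun p => f p.1 * g p.2)

/-- `g ↦ f ⊗ g` as a linear map. -/
def tensL (f : EuclideanSpace ℂ ι) :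
    EuclideanSpace ℂ ι →ₗ[ℂ] EuclideanSpace ℂ (ι × ι) where
  toFun g := tens f g
  map_add' x y := by
    ext p
    simp only [tens, PiLp.add_apply]; ring
  map_smul' c x := by
    ext p
    simp only [tens, PiLp.smul_apply, smul_eq_mul, RingHom.id_apply]; ring

/-- `f ↦ f ⊗ g` as a linear map. -/
def tensR (g : EuclideanSpace ℂ ι) :
    EuclideanSpace ℂ ι →ₗ[ℂ] EuclideanSpace ℂ (ι × ι) where
  toFun f := tens f g
  map_add' x y := by
    ext p
    simp only [tens, PiLp.add_apply]; ring
  map_smul' c x := by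
    ext p
    simp only [tens, PiLp.smul_apply, smul_eq_mul, RingHom.id_apply]; ring

/-- Action of a matrix on a Euclidean space vector. -/
def appM {κ : Type*} [Fintype κ] (M : Matrix κ κ ℂ) (v : EuclideanSpace ℂ κ) :
    EuclideanSpace ℂ κ :=
  WithLp.toLp 2 (fun i => ∑ j, M i j * v j)

/-- Action of a matrix as a linear map on the Euclidean space. -/
def mact {κ : Type*} [Fintype κ] (M : Matrix κ κ ℂ) :
    EuclideanSpace ℂ κ →ₗ[ℂ] EuclideanSpace ℂ κ where
  toFun := appM M
  map_add' x y := by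
    ext i
    simp only [appM, PiLp.add_apply, mul_add, Finset.sum_add_distrib]
  map_smul' c x := by
    ext i
    simp only [appM, PiLp.smul_apply, smul_eq_mul, RingHom.id_apply, Finset.mul_sum]
    refine Finset.sum_congr rfl fun j _ => ?_
    ring

/-- The leg `V₁₂` on `H ⊗ H ⊗ H`. -/
def leg12 (V : Matrix (ι × ι) (ι × ι) ℂ) : Matrix (ι × ι × ι) (ι × ι × ι) ℂ :=
  fun p q => V (p.1, p.2.1) (q.1, q.2.1) * (if p.2.2 = q.2.2 then 1 else 0)

/-- The leg `V₁₃` on `H ⊗ H ⊗ H`. -/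
def leg13 (V : Matrix (ι × ι) (ι × ι) ℂ) : Matrix (ι × ι × ι) (ι × ι × ι) ℂ :=
  fun p q => V (p.1, p.2.2) (q.1, q.2.2) * (if p.2.1 = q.2.1 then 1 else 0)

/-- The leg `V₂₃` on `H ⊗ H ⊗ H`. -/
def leg23 (V : Matrix (ι × ι) (ι × ι) ℂ) : Matrix (ι × ι × ι) (ι × ι × ι) ℂ :=
  fun p q => V (p.2.1, p.2.2) (q.2.1, q.2.2) * (if p.1 = q.1 then 1 else 0)

/-- The pentagon equation `V₁₂ V₁₃ V₂₃ = V₂₃ V₁₂`. -/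
def Pentagon (V : Matrix (ι × ι) (ι × ι) ℂ) : Prop :=
  leg12 V * leg13 V * leg23 V = leg23 V * leg12 V

/-- `V` is a multiplicative unitary: a unitary satisfying the pentagon equation. -/
def IsMU (V : Matrix (ι × ι) (ι × ι) ℂ) : Prop :=
  V * V.conjTranspose = 1 ∧ V.conjTranspose * V = 1 ∧ Pentagon V

/-- `ξ` is a fixed vector for `V`. -/
def Fixed (V : Matrix (ι × ι) (ι × ι) ℂ) (ξ : EuclideanSpace ℂ ι) : Prop :=
  ∀ η, mact V (tens ξ η) = tens ξ η

/-- `ξ` is a cofixed vector for `V`. -/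
def Cofixed (V : Matrix (ι × ι) (ι × ι) ℂ) (ξ : EuclideanSpace ℂ ι) : Prop :=
  ∀ η, mact V (tens η ξ) = tens η ξ

/-- `V` has multiplicity 1, with fixed unit vector `e` and cofixed unit vector `eHat`. -/
def Mult1 (V : Matrix (ι × ι) (ι × ι) ℂ) (e eHat : EuclideanSpace ℂ ι) : Prop :=
  ‖e‖ = 1 ∧ ‖eHat‖ = 1 ∧ Fixed V e ∧ Cofixed V eHat ∧
    (∀ ξ, Fixed V ξ → ∃ c : ℂ, ξ = c • e) ∧
    (∀ ξ, Cofixed V ξ → ∃ c : ℂ, ξ = c • eHat)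

/-- A pre-subgroup of `V` (with fixed vector `e`): a unit vector `f` with
`⟨f,e⟩ > 0` and `V(f⊗f) = f⊗f`. -/
def IsPreSubgroup (V : Matrix (ι × ι) (ι × ι) ℂ) (e f : EuclideanSpace ℂ ι) : Prop :=
  ‖f‖ = 1 ∧ 0 < ⟪f, e⟫_ℂ ∧ mact V (tens f f) = tens f f

/-- The subspace `H^f = {η : V(f⊗η) = f⊗η}`. -/
def subUp (V : Matrix (ι × ι) (ι × ι) ℂ) (f : EuclideanSpace ℂ ι) :
    Submodule ℂ (EuclideanSpace ℂ ι) :=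
  LinearMap.ker ((mact V).comp (tensL f) - tensL f)

/-- The subspace `H_f = {η : V(η⊗f) = η⊗f}`. -/
def subDown (V : Matrix (ι × ι) (ι × ι) ℂ) (f : EuclideanSpace ℂ ι) :
    Submodule ℂ (EuclideanSpace ℂ ι) :=
  LinearMap.ker ((mact V).comp (tensR f) - tensR f)

/-- The slice `L(ω_{ξ,η}) = (ω_{ξ,η} ⊗ id)(V)`. -/
def Lslice (V : Matrix (ι × ι) (ι × ι) ℂ) (ξ η : EuclideanSpace ℂ ι) : Matrix ι ι ℂ :=
  fun a b => ∑ x, ∑ y, (starRingEnd ℂ) (ξ x) * η y * V (x, a) (y, b)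

/-- The slice `ρ(ω_{ξ,η}) = (id ⊗ ω_{ξ,η})(V)`. -/
def Rslice (V : Matrix (ι × ι) (ι × ι) ℂ) (ξ η : EuclideanSpace ℂ ι) : Matrix ι ι ℂ :=
  fun a b => ∑ x, ∑ y, (starRingEnd ℂ) (ξ x) * η y * V (a, x) (b, y)

/-- The slice `L(ω) = (ω ⊗ id)(V)` of a general linear functional `ω` on `L(H)`. -/
def LslF (V : Matrix (ι × ι) (ι × ι) ℂ) (ω : Matrix ι ι ℂ →ₗ[ℂ] ℂ) : Matrix ι ι ℂ :=
  fun a b => ω (fun x y => V (x, a) (y, b))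

/-- A state on `L(H)`: a unital positive linear functional. -/
def IsState (ω : Matrix ι ι ℂ →ₗ[ℂ] ℂ) : Prop :=
  ω 1 = 1 ∧ ∀ M : Matrix ι ι ℂ, M.PosSemidef → ∃ r : ℝ, 0 ≤ r ∧ ω M = r

open Matrix Kronecker ComplexConjugate

lemma sum_mul_tens_of_mact_tens {κ : Type*} [Fintype κ] {W : Matrix (κ × κ) (κ × κ) ℂ}
    {ξ η : EuclideanSpace ℂ κ} (h : mact W (tens ξ η) = tens ξ η) (a b : κ) :
    ∑ x, ∑ y, W (a, b) (x, y) * (ξ x * η y) = ξ a * η b := by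
  simpa [mact, appM, tens, Fintype.sum_prod_type] using congrArg (·.ofLp (a, b)) h

lemma star_mul_of_mul_eq_self {n m α : Type*} [Fintype n] [DecidableEq n] [Semiring α]
    [StarRing α] {U : Matrix n n α} {A : Matrix n m α} (hU : U ∈ unitary (Matrix n n α))
    (h : U * A = A) : star U * A = A := by
  conv_lhs => rw [← h, ← Matrix.mul_assoc, Unitary.star_mul_self_of_mem hU, Matrix.one_mul]

lemma sum_comm_cycle₅ {α β γ δ ε M : Type*} [Fintype α] [Fintype β] [Fintype γ] [Fintype δ]
    [Fintype ε] [AddCommMonoid M] (f : α → β → γ → δ → ε → M) :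
    ∑ a, ∑ b, ∑ c, ∑ d, ∑ e, f a b c d e = ∑ b, ∑ c, ∑ d, ∑ e, ∑ a, f a b c d e :=
  Finset.sum_comm.trans <| Fintype.sum_congr _ _ fun _ => Finset.sum_comm.trans <|
    Fintype.sum_congr _ _ fun _ => Finset.sum_comm.trans <|
      Fintype.sum_congr _ _ fun _ => Finset.sum_comm

section

variable {V : Matrix (ι × ι) (ι × ι) ℂ}

lemma IsMU.mem_unitary (hV : IsMU V) : V ∈ unitary (Matrix (ι × ι) (ι × ι) ℂ) :=
  Unitary.mem_iff.2 ⟨hV.2.1, hV.1⟩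

lemma leg12_mem_unitary (hV : V ∈ unitary (Matrix (ι × ι) (ι × ι) ℂ)) :
    leg12 V ∈ unitary (Matrix (ι × ι × ι) (ι × ι × ι) ℂ) := by
  have hleg : leg12 V = (V ⊗ₖ (1 : Matrix ι ι ℂ)).submatrix (Equiv.prodAssoc ι ι ι).symm
      (Equiv.prodAssoc ι ι ι).symm := by
    ext ⟨a, b, c⟩ ⟨x, y, z⟩
    simp [leg12, one_apply]
  obtain ⟨h₁, h₂⟩ := Unitary.mem_iff.1 (kronecker_mem_unitary hV (unitary (Matrix ι ι ℂ)).one_mem)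
  rw [hleg, Unitary.mem_iff, star_eq_conjTranspose, conjTranspose_submatrix, submatrix_mul_equiv,
    submatrix_mul_equiv, ← star_eq_conjTranspose, h₁, h₂, submatrix_one_equiv]
  exact ⟨rfl, rfl⟩

lemma leg23_mem_unitary (hV : V ∈ unitary (Matrix (ι × ι) (ι × ι) ℂ)) :
    leg23 V ∈ unitary (Matrix (ι × ι × ι) (ι × ι × ι) ℂ) := by
  have hleg : leg23 V = (1 : Matrix ι ι ℂ) ⊗ₖ V := by
    ext ⟨a, b, c⟩ ⟨x, y, z⟩
    simp [leg23, one_apply, mul_comm]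
  exact hleg ▸ kronecker_mem_unitary (unitary (Matrix ι ι ℂ)).one_mem hV

lemma Pentagon.leg13_mul_leg23 (hP : Pentagon V) (hV : V ∈ unitary (Matrix (ι × ι) (ι × ι) ℂ)) :
    leg13 V * leg23 V = star (leg12 V) * leg23 V * leg12 V := by
  rw [Matrix.mul_assoc, ← hP, Matrix.mul_assoc, ← Matrix.mul_assoc,
    Unitary.star_mul_self_of_mem (leg12_mem_unitary hV), Matrix.one_mul]

lemma Pentagon.leg12_mul_leg13 (hP : Pentagon V) (hV : V ∈ unitary (Matrix (ι × ι) (ι × ι) ℂ)) :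
    leg12 V * leg13 V = leg23 V * leg12 V * star (leg23 V) := by
  rw [← hP, Matrix.mul_assoc _ (leg23 V), Unitary.mul_star_self_of_mem (leg23_mem_unitary hV),
    Matrix.mul_one]

lemma leg13_mul_leg23_apply (x y a z w b : ι) :
    (leg13 V * leg23 V) (x, y, a) (z, w, b) = ∑ c, V (x, a) (z, c) * V (y, c) (w, b) := by
  simp [leg13, leg23, mul_apply, Fintype.sum_prod_type]

lemma leg12_mul_leg13_apply (a x y b z w : ι) :
    (leg12 V * leg13 V) (a, x, y) (b, z, w) = ∑ c, V (a, x) (c, z) * V (c, y) (b, w) := by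
  simp [leg12, leg13, mul_apply, Fintype.sum_prod_type]

/-- The operator `h ↦ u ⊗ v ⊗ h` from `H` to `H ⊗ H ⊗ H`. -/
def tensId (u v : EuclideanSpace ℂ ι) : Matrix (ι × ι × ι) ι ℂ :=
  fun p a => u p.1 * v p.2.1 * (1 : Matrix ι ι ℂ) p.2.2 a

/-- The operator `h ↦ h ⊗ u ⊗ v` from `H` to `H ⊗ H ⊗ H`. -/
def idTens (u v : EuclideanSpace ℂ ι) : Matrix (ι × ι × ι) ι ℂ :=
  fun p a => (1 : Matrix ι ι ℂ) p.1 a * u p.2.1 * v p.2.2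

lemma leg12_mul_tensId {ξ η : EuclideanSpace ℂ ι} (h : mact V (tens ξ η) = tens ξ η) :
    leg12 V * tensId ξ η = tensId ξ η := by
  ext ⟨a, b, c⟩ d
  simp [leg12, tensId, mul_apply, Fintype.sum_prod_type, one_apply, sum_mul_tens_of_mact_tens h]

lemma leg23_mul_idTens {ξ η : EuclideanSpace ℂ ι} (h : mact V (tens ξ η) = tens ξ η) :
    leg23 V * idTens ξ η = idTens ξ η := by
  ext ⟨a, b, c⟩ d
  simp [leg23, idTens, mul_apply, Fintype.sum_prod_type, one_apply, sum_mul_tens_of_mact_tens h]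

lemma conjTranspose_tensId_mul_mul_tensId_apply (T : Matrix (ι × ι × ι) (ι × ι × ι) ℂ)
    (u₁ v₁ u₂ v₂ : EuclideanSpace ℂ ι) (a b : ι) :
    ((tensId u₁ v₁)ᴴ * T * tensId u₂ v₂) a b =
      ∑ x, ∑ y, ∑ z, ∑ w, conj (u₁ x) * conj (v₁ y) * u₂ z * v₂ w * T (x, y, a) (z, w, b) := by
  rw [Matrix.mul_assoc]
  simp [tensId, mul_apply, Fintype.sum_prod_type, one_apply, Finset.mul_sum, mul_assoc,
    apply_ite (starRingEnd ℂ), ite_mul]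
  simp only [mul_comm, mul_assoc, mul_left_comm]

lemma conjTranspose_idTens_mul_mul_idTens_apply (T : Matrix (ι × ι × ι) (ι × ι × ι) ℂ)
    (u₁ v₁ u₂ v₂ : EuclideanSpace ℂ ι) (a b : ι) :
    ((idTens u₁ v₁)ᴴ * T * idTens u₂ v₂) a b =
      ∑ x, ∑ y, ∑ z, ∑ w, conj (u₁ x) * conj (v₁ y) * u₂ z * v₂ w * T (a, x, y) (b, z, w) := by
  rw [Matrix.mul_assoc]
  simp [idTens, mul_apply, Fintype.sum_prod_type, one_apply, Finset.mul_sum, mul_assoc,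
    apply_ite (starRingEnd ℂ), ite_mul]
  simp only [mul_comm, mul_assoc, mul_left_comm]

lemma conjTranspose_tensId_mul_leg13_mul_leg23_mul_tensId (ξ₁ ξ₂ η₁ η₂ : EuclideanSpace ℂ ι) :
    (tensId ξ₁ η₁)ᴴ * (leg13 V * leg23 V) * tensId ξ₂ η₂ = Lslice V ξ₁ ξ₂ * Lslice V η₁ η₂ := by
  ext a b
  rw [conjTranspose_tensId_mul_mul_tensId_apply]
  simp only [leg13_mul_leg23_apply]
  simp only [Lslice, mul_apply, Finset.sum_mul_sum]
  rw [sum_comm_cycle₅]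
  simp only [Finset.mul_sum]
  simp only [mul_comm, mul_assoc, mul_left_comm]

lemma conjTranspose_idTens_mul_leg12_mul_leg13_mul_idTens (ξ₁ ξ₂ η₁ η₂ : EuclideanSpace ℂ ι) :
    (idTens ξ₁ η₁)ᴴ * (leg12 V * leg13 V) * idTens ξ₂ η₂ = Rslice V ξ₁ ξ₂ * Rslice V η₁ η₂ := by
  ext a b
  rw [conjTranspose_idTens_mul_mul_idTens_apply]
  simp only [leg12_mul_leg13_apply]
  simp only [Rslice, mul_apply, Finset.sum_mul_sum]
  rw [sum_comm_cycle₅]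
  simp only [Finset.mul_sum]
  simp only [mul_comm, mul_assoc, mul_left_comm]

lemma conjTranspose_tensId_mul_leg23_mul_tensId (ξ₁ ξ₂ η₁ η₂ : EuclideanSpace ℂ ι) :
    (tensId ξ₁ η₁)ᴴ * leg23 V * tensId ξ₂ η₂ = ⟪ξ₁, ξ₂⟫_ℂ • Lslice V η₁ η₂ := by
  ext a b
  rw [conjTranspose_tensId_mul_mul_tensId_apply, Matrix.smul_apply, PiLp.inner_apply, smul_eq_mul,
    Finset.sum_mul]
  simp [leg23, Lslice, Finset.mul_sum]
  simp only [mul_comm, mul_left_comm]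

lemma conjTranspose_idTens_mul_leg12_mul_idTens (ξ₁ ξ₂ η₁ η₂ : EuclideanSpace ℂ ι) :
    (idTens ξ₁ η₁)ᴴ * leg12 V * idTens ξ₂ η₂ = ⟪η₁, η₂⟫_ℂ • Rslice V ξ₁ ξ₂ := by
  ext a b
  rw [conjTranspose_idTens_mul_mul_idTens_apply, Matrix.smul_apply, PiLp.inner_apply, smul_eq_mul,
    Finset.sum_mul]
  simp [leg12, Rslice, Finset.mul_sum]
  rw [Finset.sum_comm]
  simp only [mul_comm, mul_left_comm]

end

theorem Lslice_mul_Lslice_and_Rslice_mul_Rslice_general {ι : Type*} [Fintype ι] [DecidableEq ι]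
    (V : Matrix (ι × ι) (ι × ι) ℂ) (hV : IsMU V)
    (ξ₁ ξ₂ η₁ η₂ : EuclideanSpace ℂ ι)
    (h1 : mact V (tens ξ₁ η₁) = tens ξ₁ η₁)
    (h2 : mact V (tens ξ₂ η₂) = tens ξ₂ η₂) :
    Lslice V ξ₁ ξ₂ * Lslice V η₁ η₂ = ⟪ξ₁, ξ₂⟫_ℂ • Lslice V η₁ η₂ ∧
      Rslice V ξ₁ ξ₂ * Rslice V η₁ η₂ = ⟪η₁, η₂⟫_ℂ • Rslice V ξ₁ ξ₂ := by
  have hU := hV.mem_unitary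
  have hP : Pentagon V := hV.2.2
  constructor
  · calc Lslice V ξ₁ ξ₂ * Lslice V η₁ η₂
        = (tensId ξ₁ η₁)ᴴ * (leg13 V * leg23 V) * tensId ξ₂ η₂ :=
          (conjTranspose_tensId_mul_leg13_mul_leg23_mul_tensId ξ₁ ξ₂ η₁ η₂).symm
      _ = (leg12 V * tensId ξ₁ η₁)ᴴ * leg23 V * (leg12 V * tensId ξ₂ η₂) := by
          rw [hP.leg13_mul_leg23 hU, conjTranspose_mul, star_eq_conjTranspose]
          simp only [Matrix.mul_assoc]
      _ = ⟪ξ₁, ξ₂⟫_ℂ • Lslice V η₁ η₂ := by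
          rw [leg12_mul_tensId h1, leg12_mul_tensId h2, conjTranspose_tensId_mul_leg23_mul_tensId]
  · calc Rslice V ξ₁ ξ₂ * Rslice V η₁ η₂
        = (idTens ξ₁ η₁)ᴴ * (leg12 V * leg13 V) * idTens ξ₂ η₂ :=
          (conjTranspose_idTens_mul_leg12_mul_leg13_mul_idTens ξ₁ ξ₂ η₁ η₂).symm
      _ = (star (leg23 V) * idTens ξ₁ η₁)ᴴ * leg12 V * (star (leg23 V) * idTens ξ₂ η₂) := by
          rw [hP.leg12_mul_leg13 hU, conjTranspose_mul, star_eq_conjTranspose,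
            conjTranspose_conjTranspose]
          simp only [Matrix.mul_assoc]
      _ = ⟪η₁, η₂⟫_ℂ • Rslice V ξ₁ ξ₂ := by
          rw [star_mul_of_mul_eq_self (leg23_mem_unitary hU) (leg23_mul_idTens h1),
            star_mul_of_mul_eq_self (leg23_mem_unitary hU) (leg23_mul_idTens h2),
            conjTranspose_idTens_mul_leg12_mul_idTens]

/-- product formulas for slices of `V` at fixed elementary tensors. -/
theorem Lslice_mul_Lslice_and_Rslice_mul_Rslice {ι : Type*} [Fintype ι] [DecidableEq ι] [Nonempty ι]
    (V : Matrix (ι × ι) (ι × ι) ℂ) (hV : IsMU V)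
    (ξ₁ ξ₂ η₁ η₂ : EuclideanSpace ℂ ι)
    (h1 : mact V (tens ξ₁ η₁) = tens ξ₁ η₁)
    (h2 : mact V (tens ξ₂ η₂) = tens ξ₂ η₂) :
    Lslice V ξ₁ ξ₂ * Lslice V η₁ η₂ = ⟪ξ₁, ξ₂⟫_ℂ • Lslice V η₁ η₂ ∧
      Rslice V ξ₁ ξ₂ * Rslice V η₁ η₂ = ⟪η₁, η₂⟫_ℂ • Rslice V ξ₁ ξ₂ :=
  Lslice_mul_Lslice_and_Rslice_mul_Rslice_general V hV ξ₁ ξ₂ η₁ η₂ h1 h2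

end MU
end
end

section
/- Let V be a multiplicative unitary on a finite-dimensional Hilbert space H and f a unit vector with V(f⊗f) = f⊗f. Then every vector ξ in H_f ⊗ H^f satisfies Vξ = ξ, where H_f = {η : V(η⊗f) = η⊗f} and H^f = {η : V(f⊗η) = f⊗η}. -/
open scoped InnerProductSpace ComplexOrder

noncomputable section

/-!
Let `a ∈ H_f` and `b ∈ H^f`. On `H ⊗ H ⊗ H` the vector `a ⊗ f ⊗ b` is fixed by `V₁₂` and by
`V₂₃`, so the pentagon equation `V₁₂ V₁₃ V₂₃ = V₂₃ V₁₂` together with the invertibility of `V₁₂`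
shows that it is fixed by `V₁₃` as well. Since `V₁₃` does not touch the middle leg, where `f ≠ 0`
sits, this says exactly that `V (a ⊗ b) = a ⊗ b`. The fixed vectors of `V` form a subspace, so
the claim passes to the span of such tensors.
-/

namespace MU

open Matrix

variable {ι : Type*}

lemma mact_ofLp {κ : Type*} [Fintype κ] (M : Matrix κ κ ℂ) (v : EuclideanSpace ℂ κ) :
    (mact M v).ofLp = M *ᵥ v.ofLp := rfl

lemma mem_subDown_iff [Fintype ι] {V : Matrix (ι × ι) (ι × ι) ℂ} {f a : EuclideanSpace ℂ ι} :
    a ∈ subDown V f ↔ mact V (tens a f) = tens a f := by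
  simp only [subDown, LinearMap.mem_ker, LinearMap.sub_apply, LinearMap.comp_apply, sub_eq_zero]
  rfl

lemma mem_subUp_iff [Fintype ι] {V : Matrix (ι × ι) (ι × ι) ℂ} {f b : EuclideanSpace ℂ ι} :
    b ∈ subUp V f ↔ mact V (tens f b) = tens f b := by
  simp only [subUp, LinearMap.mem_ker, LinearMap.sub_apply, LinearMap.comp_apply, sub_eq_zero]
  rfl

lemma leg12_one [DecidableEq ι] : leg12 (1 : Matrix (ι × ι) (ι × ι) ℂ) = 1 := by
  ext p q
  simp only [leg12, one_apply, Prod.ext_iff]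
  split_ifs <;> simp_all

variable [Fintype ι] [DecidableEq ι]

lemma leg12_mul (A B : Matrix (ι × ι) (ι × ι) ℂ) : leg12 A * leg12 B = leg12 (A * B) := by
  ext p q
  simp only [mul_apply, leg12, Fintype.sum_prod_type, Finset.sum_mul]
  simp [mul_comm]

lemma leg13_mulVec_eq_self_of_pentagon {V : Matrix (ι × ι) (ι × ι) ℂ} (hV : Vᴴ * V = 1)
    (hP : Pentagon V) {x : ι × ι × ι → ℂ} (h12 : leg12 V *ᵥ x = x) (h23 : leg23 V *ᵥ x = x) :
    leg13 V *ᵥ x = x := by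
  have h : leg12 V *ᵥ leg13 V *ᵥ x = x :=
    calc leg12 V *ᵥ leg13 V *ᵥ x = (leg12 V * leg13 V * leg23 V) *ᵥ x := by
          rw [← mulVec_mulVec, ← mulVec_mulVec, h23]
      _ = (leg23 V * leg12 V) *ᵥ x := by rw [hP]
      _ = x := by rw [← mulVec_mulVec, h12, h23]
  have hinv : leg12 Vᴴ * leg12 V = 1 := by rw [leg12_mul, hV, leg12_one]
  calc leg13 V *ᵥ x = (leg12 Vᴴ * leg12 V) *ᵥ leg13 V *ᵥ x := by rw [hinv, one_mulVec]
    _ = leg12 Vᴴ *ᵥ x := by rw [← mulVec_mulVec, h]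
    _ = (leg12 Vᴴ * leg12 V) *ᵥ x := by rw [← mulVec_mulVec, h12]
    _ = x := by rw [hinv, one_mulVec]

def tens3 (a b c : EuclideanSpace ℂ ι) : ι × ι × ι → ℂ :=
  fun p => a p.1 * b p.2.1 * c p.2.2

section LegsOnTens3

variable (A : Matrix (ι × ι) (ι × ι) ℂ) (a b c : EuclideanSpace ℂ ι)

lemma leg12_mulVec_tens3 :
    leg12 A *ᵥ tens3 a b c = fun p => (mact A (tens a b)).ofLp (p.1, p.2.1) * c p.2.2 := by
  funext p
  simp only [mact_ofLp, mulVec, dotProduct, leg12, tens3, tens, Fintype.sum_prod_type,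
    Finset.sum_mul]
  simp [mul_assoc, mul_comm]

lemma leg23_mulVec_tens3 :
    leg23 A *ᵥ tens3 a b c = fun p => a p.1 * (mact A (tens b c)).ofLp p.2 := by
  funext p
  simp only [mact_ofLp, mulVec, dotProduct, leg23, tens3, tens, Fintype.sum_prod_type,
    Finset.mul_sum]
  simp [mul_assoc, mul_comm, mul_left_comm]

lemma leg13_mulVec_tens3 :
    leg13 A *ᵥ tens3 a b c = fun p => b p.2.1 * (mact A (tens a c)).ofLp (p.1, p.2.2) := by
  funext p
  simp only [mact_ofLp, mulVec, dotProduct, leg13, tens3, tens, Fintype.sum_prod_type,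
    Finset.mul_sum]
  simp [mul_assoc, mul_comm, mul_left_comm]

variable {A a b c}

lemma leg12_mulVec_tens3_of_mact_eq (h : mact A (tens a b) = tens a b) :
    leg12 A *ᵥ tens3 a b c = tens3 a b c := by
  rw [leg12_mulVec_tens3, h]
  rfl

lemma leg23_mulVec_tens3_of_mact_eq (h : mact A (tens b c) = tens b c) :
    leg23 A *ᵥ tens3 a b c = tens3 a b c := by
  rw [leg23_mulVec_tens3, h]
  funext p
  exact (mul_assoc _ _ _).symm

lemma mact_tens_eq_of_leg13_mulVec_tens3 (hb : b ≠ 0)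
    (h : leg13 A *ᵥ tens3 a b c = tens3 a b c) : mact A (tens a c) = tens a c := by
  obtain ⟨j, hj⟩ : ∃ j, b j ≠ 0 := by
    by_contra! h0
    exact hb (by ext j; simp [h0])
  apply WithLp.ofLp_injective
  funext p
  have hp : b j * (mact A (tens a c)).ofLp p = a p.1 * b j * c p.2 := by
    simpa only [leg13_mulVec_tens3, tens3] using congrFun h (p.1, j, p.2)
  apply mul_left_cancel₀ hj
  rw [hp, tens, WithLp.ofLp_toLp]
  ring

end LegsOnTens3

lemma IsMU.mact_tens_eq {V : Matrix (ι × ι) (ι × ι) ℂ} (hV : IsMU V)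
    {f a b : EuclideanSpace ℂ ι} (hf : f ≠ 0)
    (ha : mact V (tens a f) = tens a f) (hb : mact V (tens f b) = tens f b) :
    mact V (tens a b) = tens a b :=
  mact_tens_eq_of_leg13_mulVec_tens3 hf <|
    leg13_mulVec_eq_self_of_pentagon hV.2.1 hV.2.2
      (leg12_mulVec_tens3_of_mact_eq ha) (leg23_mulVec_tens3_of_mact_eq hb)

theorem fixed_on_subDown_tensor_subUp_general {ι : Type*} [Fintype ι] [DecidableEq ι]
    (V : Matrix (ι × ι) (ι × ι) ℂ) (hV : IsMU V)
    (f : EuclideanSpace ℂ ι) (hf : ‖f‖ = 1) :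
    ∀ w ∈ Submodule.span ℂ
        {w | ∃ a ∈ subDown V f, ∃ b ∈ subUp V f, w = tens a b},
      mact V w = w := by
  have hf0 : f ≠ 0 := by
    rintro rfl
    simp at hf
  have hspan : Submodule.span ℂ {w | ∃ a ∈ subDown V f, ∃ b ∈ subUp V f, w = tens a b} ≤
      LinearMap.eqLocus (mact V) LinearMap.id := by
    rw [Submodule.span_le]
    rintro _ ⟨a, ha, b, hb, rfl⟩
    exact hV.mact_tens_eq hf0 (mem_subDown_iff.1 ha) (mem_subUp_iff.1 hb)
  exact fun w hw => hspan hw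

/-- every vector of `H_f ⊗ H^f` is fixed by `V`. -/
theorem fixed_on_subDown_tensor_subUp {ι : Type*} [Fintype ι] [DecidableEq ι] [Nonempty ι]
    (V : Matrix (ι × ι) (ι × ι) ℂ) (hV : IsMU V)
    (f : EuclideanSpace ℂ ι) (hf : ‖f‖ = 1)
    (hff : mact V (tens f f) = tens f f) :
    ∀ w ∈ Submodule.span ℂ
        {w | ∃ a ∈ subDown V f, ∃ b ∈ subUp V f, w = tens a b},
      mact V w = w :=
  fixed_on_subDown_tensor_subUp_general V hV f hf

end MU
end
end
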